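/- Let d₁ ∈ {0,…,d} and let U ∈ ℝ^{d×d₁} have orthonormal columns (UᵀU = I). For v ∈ ℝ^d write v_U = UUᵀv and v_{U⊥} = v − UUᵀv. Let α = 1/3, and let K ≥ 2, R ≥ 1, β ≥ 0 satisfy (1/3)^K ≤ β and 100·R·K⁴·β ≤ 1. Let z₁ ∈ ℝ^d with ‖z₁‖₂ = 1, and suppose that for each round r ∈ [R] there are vectors w_{r,0}, …, w_{r,K} and y_{r,1}, …, y_{r,K} satisfying: ‖w_{r,0} − (z_r)_{U⊥}‖₂ ≤ α‖(z_r)_{U⊥}‖₂ + β‖z_r‖₂; for each k ∈ [K], ‖y_{r,k} − (w_{r,k−1})_U‖₂ ≤ α‖(w_{r,k−1})_U‖₂ + β‖w_{r,k−1}‖₂ and w_{r,k} = w_{r,k−1} − y_{r,k}; and z_{r+1} = z_r − w_{r,K}. Then ‖z_r‖₂ ≤ 2 for all r ∈ [R+1], and the final iterate satisfies ‖z_{R+1} − UUᵀz₁‖₂ ≤ 4R(K+2)β + (2/3)^R + 12K²β. -/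

import Mathlib

open Matrix

/-- Euclidean norm of a vector in `ℝ^d`. -/
noncomputable def nrm {d : ℕ} (v : Fin d → ℝ) : ℝ := Real.sqrt (v ⬝ᵥ v)

/-- Orthogonal projection onto the column span of `U`: `v_U = UUᵀv`. -/
def pU {d dOne : ℕ} (U : Matrix (Fin d) (Fin dOne) ℝ) (v : Fin d → ℝ) : Fin d → ℝ :=
  U *ᵥ (Uᵀ *ᵥ v)

/-- Complementary projection: `v_{U⊥} = v − UUᵀv`. -/
def pPerp {d dOne : ℕ} (U : Matrix (Fin d) (Fin dOne) ℝ) (v : Fin d → ℝ) : Fin d → ℝ :=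
  v - pU U v

open WithLp

/-!
Write `P = UUᵀ`. In one round the first oracle call returns `(z_r)_{U⊥}` up to an error
`e ≤ ‖(z_r)_{U⊥}‖/3 + β‖z_r‖`. Each inner call removes the `U`-component of the current `w`
up to a third of it plus `O(β)`, so `‖P w_k‖ ≤ 3⁻ᵏ e + 6β`, while the `U⊥`-component only
moves by the same amounts, a geometric series of total size `e/2 + 6kβ`. Since `3⁻ᴷ ≤ β`,
the round changes `P z` by at most `7β` and leaves `‖(1 - P) z‖` at most half its old value
plus `O(Kβ)`. After `R` rounds, `P z` has drifted `O(Rβ)` from `P z₁` and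
`‖(1 - P) z‖ ≤ 2⁻ᴿ + O(Kβ)`. Only idempotence of `P` and `‖P v‖, ‖v - P v‖ ≤ ‖v‖` are
used, so the argument runs for any such projection on a seminormed group.
-/

structure IsBicontractiveProjection {E : Type*} [SeminormedAddCommGroup E] (P : E →+ E) :
    Prop where
  map_map : ∀ v, P (P v) = P v
  norm_map_le : ∀ v, ‖P v‖ ≤ ‖v‖
  norm_sub_map_le : ∀ v, ‖v - P v‖ ≤ ‖v‖

namespace IsBicontractiveProjection

variable {E : Type*} [SeminormedAddCommGroup E] {P : E →+ E}

theorem map_sub_map (hP : IsBicontractiveProjection P) (v : E) : P (v - P v) = 0 := by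
  rw [map_sub, hP.map_map, sub_self]

theorem norm_map_le_of_map_eq_zero (hP : IsBicontractiveProjection P) {a : E} (ha : P a = 0)
    (x : E) : ‖P x‖ ≤ ‖x - a‖ := by
  simpa [ha] using hP.norm_map_le (x - a)

theorem norm_sub_map_sub_le_of_map_eq_zero (hP : IsBicontractiveProjection P) {a : E}
    (ha : P a = 0) (x : E) : ‖x - P x - a‖ ≤ ‖x - a‖ := by
  have h : x - P x - a = x - a - P (x - a) := by rw [map_sub, ha]; abel
  exact h ▸ hP.norm_sub_map_le (x - a)

variable {β e : ℝ} {K : ℕ}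

theorem inner_refinement_le (hP : IsBicontractiveProjection P) (hβ : 0 ≤ β) {z : E}
    (w y : ℕ → E) (hw0 : ‖w 0 - (z - P z)‖ ≤ e)
    (hbudget : ‖z - P z‖ + 2 * e + 6 * K * β ≤ 4)
    (hy : ∀ k < K, ‖y (k + 1) - P (w k)‖ ≤ 1 / 3 * ‖P (w k)‖ + β * ‖w k‖)
    (hw : ∀ k < K, w (k + 1) = w k - y (k + 1)) :
    ∀ k ≤ K, ‖P (w k)‖ ≤ (1 / 3) ^ k * e + 6 * β ∧
      ‖w k - P (w k) - (z - P z)‖ ≤ (3 / 2 - (1 / 3) ^ k / 2) * e + 6 * k * β := by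
  have he : 0 ≤ e := (norm_nonneg _).trans hw0
  have hQz := hP.map_sub_map z
  intro k hk
  induction k with
  | zero =>
    have hP0 := hP.norm_map_le_of_map_eq_zero hQz (w 0)
    have hQ0 := hP.norm_sub_map_sub_le_of_map_eq_zero hQz (w 0)
    simp only [pow_zero, Nat.cast_zero]
    constructor <;> linarith
  | succ k ih =>
    obtain ⟨hPw, hQw⟩ := ih (by omega)
    have hkK : k < K := by omega
    have hkK' : (k : ℝ) + 1 ≤ K := by exact_mod_cast hkK
    -- `hbudget` keeps `‖w k‖ ≤ 4`, so the oracle's `β * ‖w k‖` term is at most `4 * β`.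
    have hwk : ‖w k‖ ≤ 4 := by
      have hsplit : w k = P (w k) + (z - P z) + (w k - P (w k) - (z - P z)) := by abel
      have hpow : (1 / 3 : ℝ) ^ k * e ≤ e :=
        mul_le_of_le_one_left he (pow_le_one₀ (by norm_num) (by norm_num))
      calc ‖w k‖ ≤ ‖P (w k)‖ + ‖z - P z‖ + ‖w k - P (w k) - (z - P z)‖ :=
            (congrArg norm hsplit).trans_le norm_add₃_le
        _ ≤ 4 := by nlinarith
    have hE : ‖y (k + 1) - P (w k)‖ ≤ (1 / 3) ^ (k + 1) * e + 6 * β := by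
      have := mul_le_mul_of_nonneg_left hwk hβ
      linear_combination hy k hkK + this + hPw / 3
    have hdiff : ‖w (k + 1) - (w k - P (w k))‖ = ‖y (k + 1) - P (w k)‖ := by
      rw [hw k hkK, ← norm_neg]; congr 1; abel
    have hQwk := hP.map_sub_map (w k)
    constructor
    · exact (hP.norm_map_le_of_map_eq_zero hQwk _).trans (hdiff ▸ hE)
    · calc ‖w (k + 1) - P (w (k + 1)) - (z - P z)‖
            ≤ ‖w (k + 1) - P (w (k + 1)) - (w k - P (w k))‖
              + ‖w k - P (w k) - (z - P z)‖ := norm_sub_le_norm_sub_add_norm_sub _ _ _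
          _ ≤ ‖y (k + 1) - P (w k)‖ + ‖w k - P (w k) - (z - P z)‖ := by
              grw [hP.norm_sub_map_sub_le_of_map_eq_zero hQwk, hdiff]
          _ ≤ _ := by push_cast; linear_combination hE + hQw

theorem refinement_round_le (hP : IsBicontractiveProjection P) (hβ : 0 ≤ β)
    (hβK : (1 / 3 : ℝ) ^ K ≤ β) (hKβ : (K + 1) * β ≤ 1 / 50) {z : E} (hz : ‖z‖ ≤ 2)
    (w y : ℕ → E) (hw0 : ‖w 0 - (z - P z)‖ ≤ 1 / 3 * ‖z - P z‖ + β * ‖z‖)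
    (hy : ∀ k < K, ‖y (k + 1) - P (w k)‖ ≤ 1 / 3 * ‖P (w k)‖ + β * ‖w k‖)
    (hw : ∀ k < K, w (k + 1) = w k - y (k + 1)) :
    ‖P (z - w K) - P z‖ ≤ 7 * β ∧
      ‖z - w K - P (z - w K)‖ ≤ ‖z - P z‖ / 2 + 3 * β + 6 * K * β := by
  have hQz : ‖z - P z‖ ≤ 2 := (hP.norm_sub_map_le z).trans hz
  have hβz : β * ‖z‖ ≤ β * 2 := mul_le_mul_of_nonneg_left hz hβ
  have hKβ0 : 0 ≤ (K : ℝ) * β := by positivity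
  obtain ⟨hPw, hQw⟩ := hP.inner_refinement_le hβ w y hw0 (by linarith) hy hw K le_rfl
  have he : 0 ≤ 1 / 3 * ‖z - P z‖ + β * ‖z‖ := (norm_nonneg _).trans hw0
  have hpow : (1 / 3 : ℝ) ^ K * (1 / 3 * ‖z - P z‖ + β * ‖z‖) ≤ β :=
    calc _ ≤ β * (1 / 3 * ‖z - P z‖ + β * ‖z‖) := mul_le_mul_of_nonneg_right hβK he
      _ ≤ β * 1 := mul_le_mul_of_nonneg_left (by linarith) hβ
      _ = β := mul_one β
  constructor
  · rw [map_sub, sub_sub_cancel_left, norm_neg]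
    linarith
  · have hsplit : z - w K - P (z - w K) = -(w K - P (w K) - (z - P z)) := by
      rw [map_sub]; abel
    rw [hsplit, norm_neg]
    nlinarith [pow_pos (by norm_num : (0 : ℝ) < 1 / 3) K]

theorem refinement_rounds_le (hP : IsBicontractiveProjection P) (hβ : 0 ≤ β)
    (hβK : (1 / 3 : ℝ) ^ K ≤ β) {R : ℕ} (hRKβ : (R + K) * β ≤ 1 / 50)
    (z : ℕ → E) (hz0 : ‖z 0‖ ≤ 1) (w y : ℕ → ℕ → E)
    (hw0 : ∀ r < R,
      ‖w r 0 - (z r - P (z r))‖ ≤ 1 / 3 * ‖z r - P (z r)‖ + β * ‖z r‖)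
    (hy : ∀ r < R, ∀ k < K,
      ‖y r (k + 1) - P (w r k)‖ ≤ 1 / 3 * ‖P (w r k)‖ + β * ‖w r k‖)
    (hw : ∀ r < R, ∀ k < K, w r (k + 1) = w r k - y r (k + 1))
    (hz : ∀ r < R, z (r + 1) = z r - w r K) :
    ∀ r ≤ R, ‖z r‖ ≤ 2 ∧ ‖P (z r) - P (z 0)‖ ≤ 7 * r * β ∧
      ‖z r - P (z r)‖ ≤ (1 / 2) ^ r + (6 + 12 * K) * β := by
  intro r hr
  induction r with
  | zero =>
    have hQ0 := hP.norm_sub_map_le (z 0)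
    have hβK0 : 0 ≤ (6 + 12 * (K : ℝ)) * β := by positivity
    refine ⟨by linarith, by simp, ?_⟩
    rw [pow_zero]
    linarith
  | succ r ih =>
    obtain ⟨hzr, hPz, hQz⟩ := ih (by omega)
    have hrR : r < R := by omega
    have hr1 : (r : ℝ) + 1 ≤ R := by exact_mod_cast hrR
    have hRβ : (r + 1 : ℝ) * β ≤ R * β := mul_le_mul_of_nonneg_right hr1 hβ
    obtain ⟨hPstep, hQstep⟩ := hP.refinement_round_le hβ hβK (by nlinarith) hzr (w r) (y r)
      (hw0 r hrR) (hy r hrR) (hw r hrR)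
    rw [← hz r hrR] at hPstep hQstep
    have hPz' : ‖P (z (r + 1)) - P (z 0)‖ ≤ 7 * (r + 1 : ℕ) * β := by
      push_cast
      linarith [norm_sub_le_norm_sub_add_norm_sub (P (z (r + 1))) (P (z r)) (P (z 0))]
    have hQz' : ‖z (r + 1) - P (z (r + 1))‖ ≤ (1 / 2) ^ (r + 1) + (6 + 12 * K) * β := by
      rw [pow_succ]; linarith
    refine ⟨?_, hPz', hQz'⟩
    have hsplit :
        z (r + 1) = P (z (r + 1)) - P (z 0) + P (z 0) + (z (r + 1) - P (z (r + 1))) := by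
      abel
    have hhalf : (1 / 2 : ℝ) ^ (r + 1) ≤ 1 / 2 :=
      pow_le_of_le_one (by norm_num) (by norm_num) (by omega)
    calc ‖z (r + 1)‖
        ≤ ‖P (z (r + 1)) - P (z 0)‖ + ‖P (z 0)‖ + ‖z (r + 1) - P (z (r + 1))‖ :=
          (congrArg norm hsplit).trans_le norm_add₃_le
      _ ≤ 2 := by
        push_cast at hPz'
        nlinarith [hP.norm_map_le (z 0)]

end IsBicontractiveProjection

theorem LinearMap.IsSymmetricProjection.isBicontractiveProjection {𝕜 E : Type*} [RCLike 𝕜]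
    [NormedAddCommGroup E] [InnerProductSpace 𝕜 E] {T : E →ₗ[𝕜] E}
    (hT : T.IsSymmetricProjection) : IsBicontractiveProjection T.toAddMonoidHom := by
  have hTT (v : E) : T (T v) = T v := congr($(hT.isIdempotentElem.eq) v)
  have pythagoras (v : E) : ‖v‖ ^ 2 = ‖T v‖ ^ 2 + ‖v - T v‖ ^ 2 := by
    have h : inner 𝕜 (T v) (v - T v) = 0 := by
      rw [hT.isSymmetric, map_sub, hTT, sub_self, inner_zero_right]
    simpa only [sq, add_sub_cancel] using norm_add_sq_eq_norm_sq_add_norm_sq_of_inner_eq_zero _ _ h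
  refine ⟨hTT, fun v => ?_, fun v => ?_⟩
  · refine sq_le_sq₀ (norm_nonneg _) (norm_nonneg _) |>.mp ?_
    simp only [LinearMap.toAddMonoidHom_coe]
    nlinarith [pythagoras v, sq_nonneg ‖v - T v‖]
  · refine sq_le_sq₀ (norm_nonneg _) (norm_nonneg _) |>.mp ?_
    simp only [LinearMap.toAddMonoidHom_coe]
    nlinarith [pythagoras v, sq_nonneg ‖T v‖]

theorem Matrix.isSymmetricProjection_toEuclideanLin_mul_transpose {m n : Type*} [Fintype m]
    [DecidableEq m] [Fintype n] [DecidableEq n] {U : Matrix m n ℝ} (hU : Uᵀ * U = 1) :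
    (toEuclideanLin (U * Uᵀ)).IsSymmetricProjection where
  isIdempotentElem := by
    have : IsIdempotentElem (U * Uᵀ) := by
      rw [IsIdempotentElem, Matrix.mul_assoc, ← Matrix.mul_assoc Uᵀ, hU, Matrix.one_mul]
    exact this.map (Matrix.toLpLinAlgEquiv 2)
  isSymmetric := by
    rw [Matrix.isSymmetric_toEuclideanLin_iff]
    simpa using Matrix.isHermitian_mul_conjTranspose_self U

section ColumnSpan

variable {d dOne : ℕ} (U : Matrix (Fin d) (Fin dOne) ℝ)

noncomputable def colSpanProj : EuclideanSpace ℝ (Fin d) →+ EuclideanSpace ℝ (Fin d) :=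
  (toEuclideanLin (U * Uᵀ)).toAddMonoidHom

theorem nrm_eq_norm_toLp (v : Fin d → ℝ) : nrm v = ‖toLp 2 v‖ := by
  rw [norm_eq_sqrt_real_inner, EuclideanSpace.inner_toLp_toLp, star_trivial, nrm]

theorem toLp_pU (v : Fin d → ℝ) : toLp 2 (pU U v) = colSpanProj U (toLp 2 v) := by
  rw [pU, Matrix.mulVec_mulVec]; rfl

theorem toLp_pPerp (v : Fin d → ℝ) :
    toLp 2 (pPerp U v) = toLp 2 v - colSpanProj U (toLp 2 v) := by
  rw [pPerp, toLp_sub, toLp_pU]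

theorem isBicontractiveProjection_colSpanProj {U : Matrix (Fin d) (Fin dOne) ℝ}
    (hU : Uᵀ * U = 1) : IsBicontractiveProjection (colSpanProj U) :=
  (isSymmetricProjection_toEuclideanLin_mul_transpose hU).isBicontractiveProjection

end ColumnSpan

theorem add_mul_le_of_mul_pow_four_le {R K β : ℝ} (hR : 1 ≤ R) (hK : 2 ≤ K) (hβ : 0 ≤ β)
    (h : 100 * R * K ^ 4 * β ≤ 1) : (R + K) * β ≤ 1 / 50 := by
  have hK3 : 8 * K ≤ K ^ 4 := by
    have : (2 : ℝ) ^ 3 ≤ K ^ 3 := pow_le_pow_left₀ (by norm_num) hK 3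
    nlinarith
  have hRK : R + K ≤ R * K ^ 4 := by nlinarith
  nlinarith [mul_le_mul_of_nonneg_right hRK hβ]

theorem hardness_amplification_core_general {d dOne : ℕ}
    (U : Matrix (Fin d) (Fin dOne) ℝ) (hU : Uᵀ * U = 1)
    (β : ℝ) (hβ : 0 ≤ β)
    (K R : ℕ) (hK : 2 ≤ K) (hR : 1 ≤ R)
    (hβK : (1 / 3 : ℝ) ^ K ≤ β) (hRKβ : 100 * (R : ℝ) * (K : ℝ) ^ 4 * β ≤ 1)
    (z : ℕ → Fin d → ℝ) (hz1 : nrm (z 1) = 1)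
    (w y : ℕ → ℕ → Fin d → ℝ)
    (hw0 : ∀ r, 1 ≤ r → r ≤ R →
      nrm (w r 0 - pPerp U (z r)) ≤ (1 / 3) * nrm (pPerp U (z r)) + β * nrm (z r))
    (hy : ∀ r, 1 ≤ r → r ≤ R → ∀ k, 1 ≤ k → k ≤ K →
      nrm (y r k - pU U (w r (k - 1))) ≤
        (1 / 3) * nrm (pU U (w r (k - 1))) + β * nrm (w r (k - 1)))
    (hw : ∀ r, 1 ≤ r → r ≤ R → ∀ k, 1 ≤ k → k ≤ K → w r k = w r (k - 1) - y r k)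
    (hzrec : ∀ r, 1 ≤ r → r ≤ R → z (r + 1) = z r - w r K) :
    (∀ r, 1 ≤ r → r ≤ R + 1 → nrm (z r) ≤ 2) ∧
    nrm (z (R + 1) - pU U (z 1)) ≤
      4 * (R : ℝ) * ((K : ℝ) + 2) * β + (2 / 3 : ℝ) ^ R + 12 * (K : ℝ) ^ 2 * β := by
  simp only [nrm_eq_norm_toLp, toLp_pPerp, toLp_pU, toLp_sub] at hz1 hw0 hy ⊢
  have bounds := (isBicontractiveProjection_colSpanProj hU).refinement_rounds_le hβ hβK
    (add_mul_le_of_mul_pow_four_le (by exact_mod_cast hR) (by exact_mod_cast hK) hβ hRKβ)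
    (fun r => toLp 2 (z (r + 1))) hz1.le
    (fun r k => toLp 2 (w (r + 1) k)) (fun r k => toLp 2 (y (r + 1) k))
    (fun r hr => hw0 (r + 1) (by omega) (by omega))
    (fun r _ k _ => by simpa using hy (r + 1) (by omega) (by omega) (k + 1) (by omega) (by omega))
    (fun r _ k _ => by
      simpa using
        congrArg (toLp 2) (hw (r + 1) (by omega) (by omega) (k + 1) (by omega) (by omega)))
    (fun r hr => by simpa using congrArg (toLp 2) (hzrec (r + 1) (by omega) (by omega)))
  refine ⟨fun r hr1 hr => ?_, ?_⟩
  · obtain ⟨s, rfl⟩ := Nat.exists_eq_add_of_le' hr1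
    exact (bounds s (by omega)).1
  · obtain ⟨-, hPR, hQR⟩ := bounds R le_rfl
    have hpow : (1 / 2 : ℝ) ^ R ≤ (2 / 3) ^ R :=
      pow_le_pow_left₀ (by norm_num) (by norm_num) R
    have hK' : (2 : ℝ) ≤ K := by exact_mod_cast hK
    have hKβ : 0 ≤ (12 * K ^ 2 - 12 * K - 6 : ℝ) * β := mul_nonneg (by nlinarith) hβ
    have hRβ : 0 ≤ (R * (4 * K + 1) : ℝ) * β := by positivity
    rw [zero_add] at hPR
    calc _ ≤ _ := norm_sub_le_norm_sub_add_norm_sub _ (colSpanProj U (toLp 2 (z (R + 1)))) _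
      _ ≤ _ := by linarith

/-- deterministic core of Lemma 4.4, hardness amplification.
Running `R` outer rounds of `K` inner refinement iterations with `(1/3, β)`-approximate
projection oracles, starting from a unit vector `z₁`, all iterates stay bounded by `2` and
the final iterate approximates the projection `UUᵀz₁` to accuracy
`4R(K+2)β + (2/3)^R + 12K²β`. -/
theorem hardness_amplification_core {d dOne : ℕ} (hdOne : dOne ≤ d)
    (U : Matrix (Fin d) (Fin dOne) ℝ) (hU : Uᵀ * U = 1)
    (β : ℝ) (hβ : 0 ≤ β)
    (K R : ℕ) (hK : 2 ≤ K) (hR : 1 ≤ R)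
    (hβK : (1 / 3 : ℝ) ^ K ≤ β) (hRKβ : 100 * (R : ℝ) * (K : ℝ) ^ 4 * β ≤ 1)
    (z : ℕ → Fin d → ℝ) (hz1 : nrm (z 1) = 1)
    (w y : ℕ → ℕ → Fin d → ℝ)
    (hw0 : ∀ r, 1 ≤ r → r ≤ R →
      nrm (w r 0 - pPerp U (z r)) ≤ (1 / 3) * nrm (pPerp U (z r)) + β * nrm (z r))
    (hy : ∀ r, 1 ≤ r → r ≤ R → ∀ k, 1 ≤ k → k ≤ K →
      nrm (y r k - pU U (w r (k - 1))) ≤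
        (1 / 3) * nrm (pU U (w r (k - 1))) + β * nrm (w r (k - 1)))
    (hw : ∀ r, 1 ≤ r → r ≤ R → ∀ k, 1 ≤ k → k ≤ K → w r k = w r (k - 1) - y r k)
    (hzrec : ∀ r, 1 ≤ r → r ≤ R → z (r + 1) = z r - w r K) :
    (∀ r, 1 ≤ r → r ≤ R + 1 → nrm (z r) ≤ 2) ∧
    nrm (z (R + 1) - pU U (z 1)) ≤
      4 * (R : ℝ) * ((K : ℝ) + 2) * β + (2 / 3 : ℝ) ^ R + 12 * (K : ℝ) ^ 2 * β :=
  hardness_amplification_core_general U hU β hβ K R hK hR hβK hRKβ z hz1 w y hw0 hy hw hzrec
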